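/- Given a defining function ρ with J[ρ] ≠ 0 near the boundary, the function ψ^{(1)} = ρ · J[ρ]^{-1/(m+1)} satisfies J[ψ^{(1)}] = 1 + O(ψ^{(1)}), i.e., J[ψ^{(1)}] = 1 on {ρ = 0}. -/

import Mathlib

open Complex Matrix

/-- Wirtinger derivative `∂/∂z_j`. -/
noncomputable def wdz {m : ℕ} (j : Fin m) (f : (Fin m → ℂ) → ℂ) (z : Fin m → ℂ) : ℂ :=
  (fderiv ℝ f z (Pi.single j 1) - Complex.I * fderiv ℝ f z (Pi.single j Complex.I)) / 2

/-- Wirtinger derivative `∂/∂z̄_j`. -/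
noncomputable def wdzbar {m : ℕ} (j : Fin m) (f : (Fin m → ℂ) → ℂ) (z : Fin m → ℂ) : ℂ :=
  (fderiv ℝ f z (Pi.single j 1) + Complex.I * fderiv ℝ f z (Pi.single j Complex.I)) / 2

/-- The `(m+1)×(m+1)` bordered matrix with top-left entry `u`, top row `b`,
left column `a`, lower-right block `A`. -/
noncomputable def borderedMat {m : ℕ} (u : ℂ) (b a : Fin m → ℂ)
    (A : Matrix (Fin m) (Fin m) ℂ) : Matrix (Fin 1 ⊕ Fin m) (Fin 1 ⊕ Fin m) ℂ :=
  Matrix.fromBlocks (Matrix.of fun _ _ => u) (Matrix.of fun _ k => b k)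
    (Matrix.of fun j _ => a j) A

/-- Complex Monge–Ampère operator `J[w] = (-1)^m det [[w, w_k̄],[w_j, w_jk̄]]`. -/
noncomputable def MAop (m : ℕ) (w : (Fin m → ℂ) → ℂ) (z : Fin m → ℂ) : ℂ :=
  (-1 : ℂ) ^ m *
    (borderedMat (w z) (fun k => wdzbar k w z) (fun j => wdz j w z)
      (Matrix.of fun j k => wdz j (fun y => wdzbar k w y) z)).det

section helpers

variable {m : ℕ} {f g : (Fin m → ℂ) → ℂ} {z : Fin m → ℂ} {j : Fin m}

lemma wdz_congr (h : f =ᶠ[nhds z] g) : wdz j f z = wdz j g z := by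
  unfold wdz; rw [h.fderiv_eq]

lemma wdz_add (hf : DifferentiableAt ℝ f z) (hg : DifferentiableAt ℝ g z) :
    wdz j (fun y => f y + g y) z = wdz j f z + wdz j g z := by
  unfold wdz; rw [fderiv_fun_add hf hg]; simp; ring

lemma wdz_mul (hf : DifferentiableAt ℝ f z) (hg : DifferentiableAt ℝ g z) :
    wdz j (fun y => f y * g y) z = f z * wdz j g z + wdz j f z * g z := by
  unfold wdz; rw [fderiv_fun_mul hf hg]
  simp [smul_eq_mul]; ring

lemma wdzbar_mul (hf : DifferentiableAt ℝ f z) (hg : DifferentiableAt ℝ g z) :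
    wdzbar j (fun y => f y * g y) z = f z * wdzbar j g z + wdzbar j f z * g z := by
  unfold wdzbar; rw [fderiv_fun_mul hf hg]
  simp [smul_eq_mul]; ring

lemma contDiffAt_wdz (hf : ContDiffAt ℝ (⊤ : ℕ∞) f z) : ContDiffAt ℝ (⊤ : ℕ∞) (wdz j f) z := by
  have h1 : ContDiffAt ℝ (⊤ : ℕ∞) (fderiv ℝ f) z := hf.fderiv_right (by simp)
  have h2 : ContDiffAt ℝ (⊤ : ℕ∞) (fun y => fderiv ℝ f y (Pi.single j 1)) z :=
    h1.clm_apply contDiffAt_const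
  have h3 : ContDiffAt ℝ (⊤ : ℕ∞) (fun y => fderiv ℝ f y (Pi.single j Complex.I)) z :=
    h1.clm_apply contDiffAt_const
  exact (h2.sub (contDiffAt_const.mul h3)).div_const 2

lemma contDiffAt_wdzbar (hf : ContDiffAt ℝ (⊤ : ℕ∞) f z) : ContDiffAt ℝ (⊤ : ℕ∞) (wdzbar j f) z := by
  have h1 : ContDiffAt ℝ (⊤ : ℕ∞) (fderiv ℝ f) z := hf.fderiv_right (by simp)
  have h2 : ContDiffAt ℝ (⊤ : ℕ∞) (fun y => fderiv ℝ f y (Pi.single j 1)) z :=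
    h1.clm_apply contDiffAt_const
  have h3 : ContDiffAt ℝ (⊤ : ℕ∞) (fun y => fderiv ℝ f y (Pi.single j Complex.I)) z :=
    h1.clm_apply contDiffAt_const
  exact (h2.add (contDiffAt_const.mul h3)).div_const 2

lemma contDiffAt_det {ι : Type*} [Fintype ι] [DecidableEq ι]
    {M : (Fin m → ℂ) → Matrix ι ι ℂ} (h : ∀ i j, ContDiffAt ℝ (⊤ : ℕ∞) (fun y => M y i j) z) :
    ContDiffAt ℝ (⊤ : ℕ∞) (fun y => (M y).det) z := by
  simp only [Matrix.det_apply]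
  apply ContDiffAt.sum
  intro σ _
  simp only [Units.smul_def, zsmul_eq_mul]
  exact contDiffAt_const.mul (contDiffAt_prod fun i _ => h (σ i) i)

lemma det_bordered_key (e : ℂ) (he : e ≠ 0) (a b c d : Fin m → ℂ)
    (S : Matrix (Fin m) (Fin m) ℂ) :
    (borderedMat 0 (fun k => e * b k) (fun j => e * a j)
      (Matrix.of fun j k => a j * c k + d j * b k + e * S j k)).det
      = e ^ (1 + m) * (borderedMat 0 b a S).det := by
  set P : Matrix (Fin 1 ⊕ Fin m) (Fin 1 ⊕ Fin m) ℂ :=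
    Matrix.fromBlocks 1 0 (Matrix.of fun j _ => d j / e) 1
  set Q : Matrix (Fin 1 ⊕ Fin m) (Fin 1 ⊕ Fin m) ℂ :=
    Matrix.fromBlocks 1 (Matrix.of fun _ k => c k / e) 0 1
  have hfact : (borderedMat 0 (fun k => e * b k) (fun j => e * a j)
      (Matrix.of fun j k => a j * c k + d j * b k + e * S j k))
      = P * (e • borderedMat 0 b a S) * Q := by
    ext i k
    rcases i with i | i <;> rcases k with k | k <;>
      simp [P, Q, borderedMat, Matrix.mul_apply, Matrix.fromBlocks, Fintype.sum_sum_type,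
        Finset.mul_sum, Finset.sum_mul, Matrix.one_apply, Fin.eq_zero]
    all_goals (field_simp; ring)
  rw [hfact, Matrix.det_mul, Matrix.det_mul, Matrix.det_smul]
  have hP : P.det = 1 := by
    rw [Matrix.det_fromBlocks_zero₁₂]; simp
  have hQ : Q.det = 1 := by
    rw [Matrix.det_fromBlocks_zero₂₁]; simp
  simp [hP, hQ, Fintype.card_sum]

end helpers

/-- if `ρ` is a defining function with `J[ρ] > 0` near the
boundary, then `ψ⁽¹⁾ = ρ ⬝ J[ρ]^(-1/(m+1))` satisfies `J[ψ⁽¹⁾] = 1` on `{ρ = 0}`. -/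
theorem stmt8 (m : ℕ) (Ω : Set (Fin m → ℂ)) (hΩ : IsOpen Ω)
    (ρ : (Fin m → ℂ) → ℝ) (hρ : ContDiff ℝ (⊤ : ℕ∞) ρ)
    (hdef : ∀ p, ρ p = 0 → fderiv ℝ ρ p ≠ 0)
    (hJreal : ∀ z ∈ Ω, (MAop m (fun y => (ρ y : ℂ)) z).im = 0)
    (hJpos : ∀ z ∈ Ω, 0 < (MAop m (fun y => (ρ y : ℂ)) z).re) :
    ∀ p ∈ Ω, ρ p = 0 →
      MAop m (fun y =>
        ((ρ y * ((MAop m (fun y' => (ρ y' : ℂ)) y).re ^ (-(1 : ℝ) / (m + 1))) : ℝ) : ℂ))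
        p = 1 := by
  intro p hp hρp
  set F : (Fin m → ℂ) → ℂ := fun y => ((ρ y : ℝ) : ℂ) with hFdef
  have hF : ContDiff ℝ (⊤ : ℕ∞) F := Complex.ofRealCLM.contDiff.comp hρ
  have hFAt : ∀ y, ContDiffAt ℝ (⊤ : ℕ∞) F y := fun y => hF.contDiffAt
  -- smoothness of the MA operator of F
  have hh : ContDiffAt ℝ (⊤ : ℕ∞) (fun y => (MAop m F y).re) p := by
    have hdet : ContDiffAt ℝ (⊤ : ℕ∞) (fun y =>
        (borderedMat (F y) (fun k => wdzbar k F y) (fun j => wdz j F y)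
          (Matrix.of fun j k => wdz j (fun x => wdzbar k F x) y)).det) p := by
      apply contDiffAt_det
      intro i j
      rcases i with i | i <;> rcases j with j | j <;>
        simp only [borderedMat, Matrix.fromBlocks_apply₁₁, Matrix.fromBlocks_apply₁₂,
          Matrix.fromBlocks_apply₂₁, Matrix.fromBlocks_apply₂₂, Matrix.of_apply]
      · exact hFAt p
      · exact contDiffAt_wdzbar (hFAt p)
      · exact contDiffAt_wdz (hFAt p)
      · exact contDiffAt_wdz (contDiffAt_wdzbar (hFAt p) : ContDiffAt ℝ (⊤ : ℕ∞) (wdzbar j F) p)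
    have : ContDiffAt ℝ (⊤ : ℕ∞) (MAop m F) p := by
      unfold MAop
      exact contDiffAt_const.mul hdet
    exact Complex.reCLM.contDiff.contDiffAt.comp p this
  set h : (Fin m → ℂ) → ℝ := fun y => (MAop m F y).re with hhdef
  have hp0 : 0 < h p := hJpos p hp
  set r : ℝ := -(1 : ℝ) / (m + 1) with hrdef
  set η : (Fin m → ℂ) → ℝ := fun y => h y ^ r with hηdef
  have hη : ContDiffAt ℝ (⊤ : ℕ∞) η p :=
    (Real.contDiffAt_rpow_const_of_ne hp0.ne').comp p hh
  set Eη : (Fin m → ℂ) → ℂ := fun y => ((η y : ℝ) : ℂ) with hEηdef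
  have hEη : ContDiffAt ℝ (⊤ : ℕ∞) Eη p := Complex.ofRealCLM.contDiff.contDiffAt.comp p hη
  set w : (Fin m → ℂ) → ℂ := fun y => F y * Eη y with hwdef
  have hw_eq : (fun y =>
      ((ρ y * ((MAop m (fun y' => (ρ y' : ℂ)) y).re ^ (-(1 : ℝ) / (m + 1))) : ℝ) : ℂ)) = w := by
    funext y
    simp only [hwdef, hFdef, hEηdef, hηdef, hhdef, hrdef, Complex.ofReal_mul]
  rw [hw_eq]
  -- differentiability facts
  have hdF : ∀ y, DifferentiableAt ℝ F y := fun y => (hF.differentiable (by simp)) y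
  have hdEη : DifferentiableAt ℝ Eη p := hEη.differentiableAt (by simp)
  have hdwbEη : ∀ k : Fin m, DifferentiableAt ℝ (wdzbar k Eη) p := fun k =>
    (contDiffAt_wdzbar hEη).differentiableAt (by simp)
  have hdwbF : ∀ (k : Fin m) y, DifferentiableAt ℝ (wdzbar k F) y := fun k y =>
    (contDiffAt_wdzbar (hFAt y)).differentiableAt (by simp)
  have hev : ∀ᶠ y in nhds p, DifferentiableAt ℝ Eη y :=
    ((hEη.of_le (m := 1) (by exact_mod_cast le_top)).eventually (by simp)).mono fun y hy => hy.differentiableAt (by simp)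
  set e : ℂ := Eη p with hedef
  have hηpos : 0 < η p := Real.rpow_pos_of_pos hp0 r
  have he : e ≠ 0 := by
    simp only [hedef, hEηdef, ne_eq, Complex.ofReal_eq_zero]
    exact hηpos.ne'
  have hFp : F p = 0 := by simp [hFdef, hρp]
  -- entries
  have E2 : ∀ j : Fin m, wdz j w p = e * wdz j F p := by
    intro j
    rw [hwdef, wdz_mul (hdF p) hdEη, hFp]
    ring
  have E3 : ∀ k : Fin m, wdzbar k w p = e * wdzbar k F p := by
    intro k
    rw [hwdef, wdzbar_mul (hdF p) hdEη, hFp]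
    ring
  have E4 : ∀ j k : Fin m, wdz j (fun y => wdzbar k w y) p =
      wdz j F p * wdzbar k Eη p + wdz j Eη p * wdzbar k F p
        + e * wdz j (fun y => wdzbar k F y) p := by
    intro j k
    have heq : (fun y => wdzbar k w y) =ᶠ[nhds p]
        (fun y => F y * wdzbar k Eη y + wdzbar k F y * Eη y) := by
      filter_upwards [hev] with y hy
      exact wdzbar_mul (hdF y) hy
    rw [wdz_congr heq,
      wdz_add (f := fun y => F y * wdzbar k Eη y) (g := fun y => wdzbar k F y * Eη y)
        ((hdF p).mul (hdwbEη k)) ((hdwbF k p).mul hdEη),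
      wdz_mul (hdF p) (hdwbEη k), wdz_mul (hdwbF k p) hdEη, hFp]
    ring
  -- compute
  have hwp : w p = 0 := by simp [hwdef, hFp]
  unfold MAop
  simp only [hwp, E2, E3, E4]
  rw [det_bordered_key e he (fun j => wdz j F p) (fun k => wdzbar k F p) (fun k => wdzbar k Eη p)
    (fun j => wdz j Eη p) (fun j k => wdz j (fun y => wdzbar k F y) p)]
  have hMAF : MAop m F p = ((h p : ℝ) : ℂ) := by
    apply Complex.ext
    · simp [hhdef]
    · simp only [Complex.ofReal_im]
      exact hJreal p hp
  have key : (-1 : ℂ) ^ m * (borderedMat 0 (fun k => wdzbar k F p) (fun j => wdz j F p)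
      (fun j k => wdz j (fun y => wdzbar k F y) p)).det = ((h p : ℝ) : ℂ) := by
    have h2 := hMAF
    unfold MAop at h2
    rw [hFp] at h2
    exact h2
  rw [mul_comm (e ^ (1 + m)) _, ← mul_assoc, key]
  -- final arithmetic
  have hreal : η p ^ (1 + m) = (h p)⁻¹ := by
    have h1 : η p ^ (1 + m) = h p ^ (r * (1 + m : ℕ)) := by
      rw [hηdef]
      rw [Real.rpow_mul hp0.le, Real.rpow_natCast]
    rw [h1]
    have h2 : r * ((1 + m : ℕ) : ℝ) = -1 := by
      rw [hrdef]
      push_cast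
      field_simp
      ring
    rw [h2, Real.rpow_neg_one]
  have hec : e ^ (1 + m) = (((h p)⁻¹ : ℝ) : ℂ) := by
    rw [hedef, hEηdef]
    push_cast [← hreal]
    norm_num
  rw [hec]
  rw [← Complex.ofReal_mul]
  rw [mul_inv_cancel₀ hp0.ne']
  simp
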